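/- Let g : ℝ^n → ℝ^m be three times continuously differentiable, M = g⁻¹(0) with dg_x surjective for all x ∈ M, and let u : [0,1] → ℝ^n be a smooth path such that for each t there is a unique closest point x(t) ∈ M to u(t), with Lagrange multiplier λ(t) defined by (dg_{x(t)})ᵀλ(t) = u(t) − x(t), and satisfying for all t: S(t) = ∅ or ‖u(t) − x(t)‖ < (1/|S(t)|) Σ_{i∈S(t)} ‖∇g_i(x(t))‖/‖d²g_i(x(t))‖, where S(t) = { i : ‖d²g_i(x(t))‖ ≠ 0 }. Let 0 = t₀ < t₁ < ⋯ < t_s = 1 be the partition whose existence is guaranteed for plain Newton tracking (each z(t_{j−1}) = (x(t_{j−1}),λ(t_{j−1})) lies in the region of quadratic convergence of Newton's method applied to G(·; u(t_j)) = 0). Then for each j, the point z(t_{j−1}) + Δz obtained from the Euler prediction Δz = −(∂G/∂z (z(t_{j−1}), u(t_{j−1})))⁻¹ (∂G/∂u (z(t_{j−1}), u(t_{j−1}))) (u(t_j) − u(t_{j−1})) also lies in the region of quadratic convergence of Newton's method applied to G(·; u(t_j)) = 0, so Newton's method started at z(t_{j−1}) + Δz converges to z(t_j) = (x(t_j), λ(t_j));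 hence the predictor–corrector scheme converges and outputs the correct critical point x(1). -/

import Mathlib

/-!
The Lagrange map is affine in the parameter, with `∂G/∂u = -(0, id)`, so `∂G/∂z` does not depend
on `u`. At a zero `z(t_{j-1})` of `G(·; u(t_{j-1}))` the Euler predictor is therefore exactly one
Newton step for `G(·; u(t_j))` started at `z(t_{j-1})`. By the quadratic Taylor bound, a Newton step
inside the tube turns an error `d` with `Mc * d < 1` into one of at most `Mc * d ^ 2 ≤ d`, so the
predicted point is again in the region of quadratic convergence, and the Newton iterates from it
contract to `z(t_j)`.
-/

/-- The Lagrange multiplier map `G(z; w) = (g x, (dg_x)ᵀ λ − w + x)`, `z = (x, λ)`. -/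
noncomputable def lagrangeG {n m : ℕ}
    (g : EuclideanSpace ℝ (Fin n) → EuclideanSpace ℝ (Fin m))
    (w : EuclideanSpace ℝ (Fin n))
    (z : EuclideanSpace ℝ (Fin n) × EuclideanSpace ℝ (Fin m)) :
    EuclideanSpace ℝ (Fin m) × EuclideanSpace ℝ (Fin n) :=
  (g z.1, ContinuousLinearMap.adjoint (fderiv ℝ g z.1) z.2 - w + z.1)

open Metric Set Filter Topology

section Contraction

variable {X : Type*} [PseudoMetricSpace X] {N : X → X} {zs : X} {c q : ℝ}

theorem mapsTo_closedBall_of_dist_le_mul (hq : q ≤ 1)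
    (hN : ∀ w ∈ closedBall zs c, dist (N w) zs ≤ q * dist w zs) :
    MapsTo N (closedBall zs c) (closedBall zs c) := fun w hw =>
  (hN w hw).trans (mul_le_of_le_one_left dist_nonneg hq) |>.trans hw

theorem dist_iterate_le_pow_mul (hq0 : 0 ≤ q) (hq1 : q ≤ 1)
    (hN : ∀ w ∈ closedBall zs c, dist (N w) zs ≤ q * dist w zs) {w : X}
    (hw : w ∈ closedBall zs c) (k : ℕ) : dist (N^[k] w) zs ≤ q ^ k * dist w zs := by
  induction k with
  | zero => simp
  | succ k ih =>
    rw [Function.iterate_succ_apply', pow_succ', mul_assoc]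
    exact (hN _ ((mapsTo_closedBall_of_dist_le_mul hq1 hN).iterate k hw)).trans
      (mul_le_mul_of_nonneg_left ih hq0)

theorem tendsto_iterate_of_dist_le_mul (hq0 : 0 ≤ q) (hq1 : q < 1)
    (hN : ∀ w ∈ closedBall zs c, dist (N w) zs ≤ q * dist w zs) {w : X}
    (hw : w ∈ closedBall zs c) : Tendsto (fun k => N^[k] w) atTop (𝓝 zs) := by
  refine tendsto_iff_dist_tendsto_zero.2 (squeeze_zero (fun _ => dist_nonneg)
    (dist_iterate_le_pow_mul hq0 hq1.le hN hw) ?_)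
  simpa using (tendsto_pow_atTop_nhds_zero_of_lt_one hq0 hq1).mul_const (dist w zs)

end Contraction

section Newton

variable {E F : Type*} [NormedAddCommGroup E] [NormedSpace ℝ E]
  [NormedAddCommGroup F] [NormedSpace ℝ F]

theorem Convex.norm_image_sub_sub_fderiv_le {G : E → F} (hG : ContDiff ℝ 2 G) {s : Set E}
    (hs : Convex ℝ s) {C : ℝ} (hC : ∀ w ∈ s, ‖fderiv ℝ (fderiv ℝ G) w‖ ≤ C) {z z' : E}
    (hz : z ∈ s) (hz' : z' ∈ s) :
    ‖G z' - G z - fderiv ℝ G z (z' - z)‖ ≤ C / 2 * ‖z' - z‖ ^ 2 := by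
  set e := z' - z
  have hG' : Differentiable ℝ (fderiv ℝ G) := (hG.fderiv_right le_rfl).differentiable one_ne_zero
  have hf : ∀ τ : ℝ, HasDerivAt (fun τ : ℝ => G (z + τ • e) - G z - τ • fderiv ℝ G z e)
      (fderiv ℝ G (z + τ • e) e - fderiv ℝ G z e) τ := by
    intro τ
    have hline : HasDerivAt (fun τ : ℝ => z + τ • e) e τ := by
      simpa using ((hasDerivAt_id τ).smul_const e).const_add z
    have hcomp := ((hG.differentiable two_ne_zero (z + τ • e)).hasFDerivAt.comp_hasDerivAt τ
      hline).sub_const (G z)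
    have := hcomp.sub ((hasDerivAt_id' τ).smul_const (fderiv ℝ G z e))
    rwa [one_smul] at this
  have hbound : ∀ τ ∈ Ico (0 : ℝ) 1,
      ‖fderiv ℝ G (z + τ • e) e - fderiv ℝ G z e‖ ≤ C * ‖e‖ ^ 2 * τ := by
    intro τ hτ
    have hlip := hs.norm_image_sub_le_of_norm_fderiv_le (fun w _ => hG'.differentiableAt) hC hz
      (hs.add_smul_sub_mem hz hz' (Ico_subset_Icc_self hτ))
    rw [add_sub_cancel_left, norm_smul, Real.norm_of_nonneg hτ.1] at hlip
    calc ‖fderiv ℝ G (z + τ • e) e - fderiv ℝ G z e‖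
        ≤ ‖fderiv ℝ G (z + τ • e) - fderiv ℝ G z‖ * ‖e‖ :=
          (fderiv ℝ G (z + τ • e) - fderiv ℝ G z).le_opNorm e
      _ ≤ C * (τ * ‖e‖) * ‖e‖ := by gcongr
      _ = C * ‖e‖ ^ 2 * τ := by ring
  have hB : ∀ τ : ℝ, HasDerivAt (fun τ => C * ‖e‖ ^ 2 / 2 * τ ^ 2) (C * ‖e‖ ^ 2 * τ) τ := fun τ =>
    ((hasDerivAt_pow 2 τ).const_mul (C * ‖e‖ ^ 2 / 2)).congr_deriv (by ring)
  have hend := image_norm_le_of_norm_deriv_right_le_deriv_boundary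
    (fun τ _ => (hf τ).continuousAt.continuousWithinAt) (fun τ _ => (hf τ).hasDerivWithinAt)
    (by simp) hB hbound (right_mem_Icc.2 zero_le_one)
  rw [one_smul, one_smul, add_sub_cancel, one_pow, mul_one] at hend
  linarith

theorem norm_newton_step_sub_le {G : E → F} (hG : ContDiff ℝ 2 G) {zs z : E} {r Mc : ℝ}
    (hGzs : G zs = 0) (hz : z ∈ closedBall zs r) {D : E ≃L[ℝ] F}
    (hD : (D : E →L[ℝ] F) = fderiv ℝ G z)
    (hbound : ∀ w ∈ closedBall zs r,
      1 / 2 * ‖(D.symm : F →L[ℝ] E)‖ * ‖fderiv ℝ (fderiv ℝ G) w‖ ≤ Mc) :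
    ‖z - D.symm (G z) - zs‖ ≤ Mc * ‖z - zs‖ ^ 2 := by
  have hzs : zs ∈ closedBall zs r := mem_closedBall_self (dist_nonneg.trans hz)
  have hMc0 : 0 ≤ Mc := le_trans (by positivity) (hbound zs hzs)
  have hremainder : z - D.symm (G z) - zs = D.symm (G zs - G z - fderiv ℝ G z (zs - z)) := by
    rw [hGzs, ← hD, ContinuousLinearEquiv.coe_coe, map_sub, map_sub, D.symm_apply_apply]
    simp only [map_zero]
    abel
  rw [hremainder, norm_sub_rev z zs]
  set K := ‖(D.symm : F →L[ℝ] E)‖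
  have hle := (D.symm : F →L[ℝ] E).le_opNorm (G zs - G z - fderiv ℝ G z (zs - z))
  rcases (norm_nonneg _ : 0 ≤ K).eq_or_lt with hK | hK
  · rw [← hK, zero_mul] at hle
    exact hle.trans (by positivity)
  · have hC : ∀ w ∈ closedBall zs r, ‖fderiv ℝ (fderiv ℝ G) w‖ ≤ 2 * Mc / K := fun w hw => by
      rw [le_div_iff₀ hK]
      linarith [hbound w hw]
    calc _ ≤ K * ‖G zs - G z - fderiv ℝ G z (zs - z)‖ := hle
      _ ≤ K * (2 * Mc / K / 2 * ‖zs - z‖ ^ 2) := by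
        gcongr
        exact (convex_closedBall zs r).norm_image_sub_sub_fderiv_le hG hC hz hzs
      _ = Mc * ‖zs - z‖ ^ 2 := by field_simp [show K ≠ 0 from hK.ne']

theorem newton_step_mem_region {G : E → F} (hG : ContDiff ℝ 2 G) {zs z : E} {r Mc : ℝ}
    (hGzs : G zs = 0) (hz : z ∈ closedBall zs r) (hMc : Mc * ‖z - zs‖ < 1) {D : E ≃L[ℝ] F}
    (hD : (D : E →L[ℝ] F) = fderiv ℝ G z)
    (hbound : ∀ w ∈ closedBall zs r,
      1 / 2 * ‖(D.symm : F →L[ℝ] E)‖ * ‖fderiv ℝ (fderiv ℝ G) w‖ ≤ Mc) :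
    z - D.symm (G z) ∈ closedBall zs r ∧ Mc * ‖z - D.symm (G z) - zs‖ < 1 := by
  have hMc0 : 0 ≤ Mc :=
    le_trans (by positivity) (hbound zs (mem_closedBall_self (dist_nonneg.trans hz)))
  have hstep := norm_newton_step_sub_le hG hGzs hz hD hbound
  have he := norm_nonneg (z - zs)
  have hq0 : 0 ≤ Mc * ‖z - zs‖ := by positivity
  refine ⟨mem_closedBall_iff_norm.2 ?_, ?_⟩
  · nlinarith [mul_le_of_le_one_left he hMc.le, mem_closedBall_iff_norm.1 hz]
  · calc _ ≤ Mc * (Mc * ‖z - zs‖ ^ 2) := by gcongr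
      _ = (Mc * ‖z - zs‖) ^ 2 := by ring
      _ < 1 := pow_lt_one₀ hq0 hMc two_ne_zero

theorem exists_newton_seq_tendsto {G : E → F} (hG : ContDiff ℝ 2 G) {zs z₀ : E} {r Mc : ℝ}
    (hGzs : G zs = 0)
    (hregion : ∀ w ∈ closedBall zs r, ∃ D : E ≃L[ℝ] F, (D : E →L[ℝ] F) = fderiv ℝ G w ∧
      ∀ w' ∈ closedBall zs r,
        1 / 2 * ‖(D.symm : F →L[ℝ] E)‖ * ‖fderiv ℝ (fderiv ℝ G) w'‖ ≤ Mc)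
    (hz₀ : z₀ ∈ closedBall zs r) (hMc : Mc * ‖z₀ - zs‖ < 1) :
    ∃ z : ℕ → E, z 0 = z₀ ∧
      (∀ k, ∃ D : E ≃L[ℝ] F, (D : E →L[ℝ] F) = fderiv ℝ G (z k) ∧
        z (k + 1) = z k - D.symm (G (z k))) ∧
      Tendsto z atTop (𝓝 zs) := by
  classical
  have hzs : zs ∈ closedBall zs r := mem_closedBall_self (dist_nonneg.trans hz₀)
  have hMc0 : 0 ≤ Mc := by
    obtain ⟨D₀, -, hD₀⟩ := hregion zs hzs
    exact le_trans (by positivity) (hD₀ zs hzs)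
  choose D hD hDbound using hregion
  rw [← dist_eq_norm] at hMc
  set c := dist z₀ zs
  have hcr : closedBall zs c ⊆ closedBall zs r := closedBall_subset_closedBall hz₀
  let N : E → E := fun w => if h : w ∈ closedBall zs r then w - (D w h).symm (G w) else w
  have hNstep : ∀ w (h : w ∈ closedBall zs r), N w = w - (D w h).symm (G w) :=
    fun w h => dif_pos h
  have hN : ∀ w ∈ closedBall zs c, dist (N w) zs ≤ Mc * c * dist w zs := fun w hw => by
    have hwr := hcr hw
    rw [hNstep w hwr, dist_eq_norm, dist_eq_norm]
    calc _ ≤ Mc * ‖w - zs‖ ^ 2 := norm_newton_step_sub_le hG hGzs hwr (hD w hwr) (hDbound w hwr)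
      _ ≤ Mc * c * ‖w - zs‖ := by
        rw [sq, ← mul_assoc]
        gcongr
        rwa [← dist_eq_norm]
  have hc : z₀ ∈ closedBall zs c := mem_closedBall.2 le_rfl
  have hmem : ∀ k, N^[k] z₀ ∈ closedBall zs r := fun k =>
    hcr ((mapsTo_closedBall_of_dist_le_mul hMc.le hN).iterate k hc)
  refine ⟨fun k => N^[k] z₀, rfl, fun k => ⟨D _ (hmem k), hD _ (hmem k), ?_⟩,
    tendsto_iterate_of_dist_le_mul (by positivity) hMc hN hc⟩
  show N^[k + 1] z₀ = _
  rw [Function.iterate_succ_apply']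
  exact hNstep _ (hmem k)

end Newton

theorem isBoundedBilinearMap_adjoint_apply {E F : Type*} [NormedAddCommGroup E]
    [InnerProductSpace ℝ E] [CompleteSpace E] [NormedAddCommGroup F] [InnerProductSpace ℝ F]
    [CompleteSpace F] :
    IsBoundedBilinearMap ℝ fun p : (E →L[ℝ] F) × F => ContinuousLinearMap.adjoint p.1 p.2 where
  add_left A B y := by simp
  smul_left c A y := by simp
  add_right A y₁ y₂ := map_add _ y₁ y₂
  smul_right c A y := map_smul _ c y
  bound := ⟨1, one_pos, fun A y => by
    simpa using (ContinuousLinearMap.adjoint A).le_opNorm y⟩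

section Lagrange

variable {n m : ℕ} (g : EuclideanSpace ℝ (Fin n) → EuclideanSpace ℝ (Fin m))

theorem contDiff_lagrangeG (hg : ContDiff ℝ 3 g) (w : EuclideanSpace ℝ (Fin n)) :
    ContDiff ℝ 2 (lagrangeG g w) := by
  have hdg : ContDiff ℝ 2 (fderiv ℝ g) := hg.fderiv_right (by norm_num)
  have hadj := isBoundedBilinearMap_adjoint_apply.contDiff.comp
    ((hdg.comp contDiff_fst).prodMk contDiff_snd)
  exact ((hg.of_le (by norm_num)).comp contDiff_fst).prodMk
    ((hadj.sub contDiff_const).add contDiff_fst)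

theorem lagrangeG_eq_add (w w' : EuclideanSpace ℝ (Fin n)) :
    lagrangeG g w' = fun z => lagrangeG g w z + (0, w - w') := by
  ext z : 1
  simp only [lagrangeG, Prod.mk_add_mk, add_zero, Prod.mk.injEq, true_and]
  abel

theorem fderiv_lagrangeG_eq (w w' : EuclideanSpace ℝ (Fin n))
    (z : EuclideanSpace ℝ (Fin n) × EuclideanSpace ℝ (Fin m)) :
    fderiv ℝ (lagrangeG g w') z = fderiv ℝ (lagrangeG g w) z := by
  rw [lagrangeG_eq_add g w w', fderiv_add_const]

theorem hasFDerivAt_lagrangeG_param (z : EuclideanSpace ℝ (Fin n) × EuclideanSpace ℝ (Fin m))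
    (w : EuclideanSpace ℝ (Fin n)) :
    HasFDerivAt (fun w => lagrangeG g w z) (-ContinuousLinearMap.inr ℝ _ _) w := by
  have := ((hasFDerivAt_const (ContinuousLinearMap.adjoint (fderiv ℝ g z.1) z.2) w).sub
    (hasFDerivAt_id (𝕜 := ℝ) w)).add_const z.1
  refine ((hasFDerivAt_const (g z.1) w).prodMk this).congr_fderiv ?_
  ext <;> simp

theorem lagrangeG_of_critical {x u : EuclideanSpace ℝ (Fin n)} {l : EuclideanSpace ℝ (Fin m)}
    (hx : g x = 0) (hl : ContinuousLinearMap.adjoint (fderiv ℝ g x) l = u - x)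
    (w : EuclideanSpace ℝ (Fin n)) : lagrangeG g w (x, l) = (0, u - w) := by
  simp only [lagrangeG, hx, hl, sub_right_comm u x w, sub_add_cancel]

theorem fderiv_lagrangeG_param_apply_sub {x u : EuclideanSpace ℝ (Fin n)}
    {l : EuclideanSpace ℝ (Fin m)} (hx : g x = 0)
    (hl : ContinuousLinearMap.adjoint (fderiv ℝ g x) l = u - x) (u' : EuclideanSpace ℝ (Fin n)) :
    fderiv ℝ (fun w => lagrangeG g w (x, l)) u (u' - u) = lagrangeG g u' (x, l) := by
  rw [(hasFDerivAt_lagrangeG_param g _ u).fderiv, lagrangeG_of_critical g hx hl]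
  simp

end Lagrange

open Finset in
theorem euler_newton_tracking_converges_general
    (n m : ℕ) (g : EuclideanSpace ℝ (Fin n) → EuclideanSpace ℝ (Fin m))
    (hg : ContDiff ℝ 3 g)
    (u : ℝ → EuclideanSpace ℝ (Fin n))
    (x : ℝ → EuclideanSpace ℝ (Fin n)) (lam : ℝ → EuclideanSpace ℝ (Fin m))
    (hxM : ∀ t ∈ Set.Icc (0:ℝ) 1, g (x t) = 0)
    (hlam : ∀ t ∈ Set.Icc (0:ℝ) 1,
      ContinuousLinearMap.adjoint (fderiv ℝ g (x t)) (lam t) = u t - x t)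
    -- the partition guaranteed by Theorem 2.7
    (s : ℕ) (t : ℕ → ℝ)
    (ht0 : t 0 = 0) (hts : t s = 1) (hmono : ∀ j < s, t j < t (j + 1))
    -- the region of quadratic convergence: radius `r` and uniform constant `Mc`
    (r : ℝ) (Mc : ℝ)
    (htube : ∀ j, 1 ≤ j → j ≤ s →
      ∀ w0 ∈ Metric.closedBall ((x (t j), lam (t j)) :
          EuclideanSpace ℝ (Fin n) × EuclideanSpace ℝ (Fin m)) r,
        ∃ D : (EuclideanSpace ℝ (Fin n) × EuclideanSpace ℝ (Fin m)) ≃L[ℝ]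
            (EuclideanSpace ℝ (Fin m) × EuclideanSpace ℝ (Fin n)),
          (D : (EuclideanSpace ℝ (Fin n) × EuclideanSpace ℝ (Fin m)) →L[ℝ]
              (EuclideanSpace ℝ (Fin m) × EuclideanSpace ℝ (Fin n))) =
            fderiv ℝ (lagrangeG g (u (t j))) w0 ∧
          ∀ w1 ∈ Metric.closedBall ((x (t j), lam (t j)) :
              EuclideanSpace ℝ (Fin n) × EuclideanSpace ℝ (Fin m)) r,
            (1 / 2) * ‖(D.symm : (EuclideanSpace ℝ (Fin m) × EuclideanSpace ℝ (Fin n)) →L[ℝ]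
                  (EuclideanSpace ℝ (Fin n) × EuclideanSpace ℝ (Fin m)))‖ *
                ‖fderiv ℝ (fun w => fderiv ℝ (lagrangeG g (u (t j))) w) w1‖ ≤ Mc)
    -- each `z(t_{j−1})` lies in the region of quadratic convergence around `z(t_j)`
    (hstep : ∀ j, 1 ≤ j → j ≤ s →
      ‖((x (t (j - 1)), lam (t (j - 1))) :
          EuclideanSpace ℝ (Fin n) × EuclideanSpace ℝ (Fin m)) -
        (x (t j), lam (t j))‖ < r ∧
      Mc * ‖((x (t (j - 1)), lam (t (j - 1))) :
          EuclideanSpace ℝ (Fin n) × EuclideanSpace ℝ (Fin m)) -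
        (x (t j), lam (t j))‖ < 1) :
    ∀ j, 1 ≤ j → j ≤ s →
      ∃ D0 : (EuclideanSpace ℝ (Fin n) × EuclideanSpace ℝ (Fin m)) ≃L[ℝ]
          (EuclideanSpace ℝ (Fin m) × EuclideanSpace ℝ (Fin n)),
        (D0 : (EuclideanSpace ℝ (Fin n) × EuclideanSpace ℝ (Fin m)) →L[ℝ]
            (EuclideanSpace ℝ (Fin m) × EuclideanSpace ℝ (Fin n))) =
          fderiv ℝ (lagrangeG g (u (t (j - 1)))) (x (t (j - 1)), lam (t (j - 1))) ∧
        ∀ Δz : EuclideanSpace ℝ (Fin n) × EuclideanSpace ℝ (Fin m),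
          Δz = -(D0.symm
              ((fderiv ℝ (fun w => lagrangeG g w (x (t (j - 1)), lam (t (j - 1))))
                  (u (t (j - 1)))) (u (t j) - u (t (j - 1))))) →
          -- the Euler-predicted point lies in the region of quadratic convergence
          ((x (t (j - 1)), lam (t (j - 1))) + Δz ∈
            Metric.closedBall ((x (t j), lam (t j)) :
              EuclideanSpace ℝ (Fin n) × EuclideanSpace ℝ (Fin m)) r ∧
           Mc * ‖(x (t (j - 1)), lam (t (j - 1))) + Δz - (x (t j), lam (t j))‖ < 1) ∧
          -- and Newton's method started there converges to `z(t_j)`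
          ∃ z : ℕ → EuclideanSpace ℝ (Fin n) × EuclideanSpace ℝ (Fin m),
            z 0 = (x (t (j - 1)), lam (t (j - 1))) + Δz ∧
            (∀ k, ∃ D : (EuclideanSpace ℝ (Fin n) × EuclideanSpace ℝ (Fin m)) ≃L[ℝ]
                (EuclideanSpace ℝ (Fin m) × EuclideanSpace ℝ (Fin n)),
              (D : (EuclideanSpace ℝ (Fin n) × EuclideanSpace ℝ (Fin m)) →L[ℝ]
                  (EuclideanSpace ℝ (Fin m) × EuclideanSpace ℝ (Fin n))) =
                fderiv ℝ (lagrangeG g (u (t j))) (z k) ∧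
              z (k + 1) = z k - D.symm (lagrangeG g (u (t j)) (z k))) ∧
            Filter.Tendsto z Filter.atTop (nhds (x (t j), lam (t j))) := by
  intro j hj hjs
  have ht : ∀ k ≤ s, t k ∈ Icc (0 : ℝ) 1 := fun k hk => by
    have hmon := (strictMonoOn_Iic_of_lt_succ (ψ := t) hmono).monotoneOn
    exact ⟨ht0 ▸ hmon s.zero_le hk k.zero_le, hts ▸ hmon hk (le_refl s) hk⟩
  have hprev := ht (j - 1) (by omega)
  have hcur := ht j hjs
  obtain ⟨hlt, hq⟩ := hstep j hj hjs
  have hz₀ := mem_closedBall_iff_norm.2 hlt.le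
  obtain ⟨D, hD, hDbound⟩ := htube j hj hjs _ hz₀
  have hroot : lagrangeG g (u (t j)) (x (t j), lam (t j)) = 0 := by
    rw [lagrangeG_of_critical g (hxM _ hcur) (hlam _ hcur), sub_self, Prod.mk_zero_zero]
  refine ⟨D, hD.trans (fderiv_lagrangeG_eq g _ _ _), ?_⟩
  rintro Δz rfl
  rw [fderiv_lagrangeG_param_apply_sub g (hxM _ hprev) (hlam _ hprev), ← sub_eq_add_neg]
  have hpred := newton_step_mem_region (contDiff_lagrangeG g hg _) hroot hz₀ hq hD hDbound
  exact ⟨hpred, exists_newton_seq_tendsto (contDiff_lagrangeG g hg _) hroot (htube j hj hjs)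
    hpred.1 hpred.2⟩

open Finset in
/-- **Corollary 2.9** (convergence of the predictor–corrector scheme, Algorithm 2).
Under the hypotheses of Theorem 2.7, let `0 = t₀ < ⋯ < t_s = 1` be a partition such that
each `z(t_{j−1}) = (x(t_{j−1}), λ(t_{j−1}))` lies in the region of quadratic convergence
of Newton's method for `G(·; u(t_j)) = 0` — i.e. within a radius-`r` tube of the solution
path on which the derivative `∂G/∂z` is invertible and
`(1/2)‖(∂G/∂z)⁻¹‖·‖∂²G/∂z²‖ ≤ Mc`, with `‖z(t_{j−1}) − z(t_j)‖ < r` and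
`Mc·‖z(t_{j−1}) − z(t_j)‖ < 1`.  Then the Euler-predicted point `z(t_{j−1}) + Δz` also
lies in the region of quadratic convergence, and Newton's method started there converges
to `z(t_j)`; hence the scheme outputs the correct critical point `x(1)`. -/
theorem euler_newton_tracking_converges
    (n m : ℕ) (g : EuclideanSpace ℝ (Fin n) → EuclideanSpace ℝ (Fin m))
    (hg : ContDiff ℝ 3 g)
    (hreg : ∀ x, g x = 0 → Function.Surjective (fderiv ℝ g x))
    (u : ℝ → EuclideanSpace ℝ (Fin n))
    (hu : ContDiffOn ℝ (⊤ : ℕ∞) u (Set.Icc 0 1))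
    (x : ℝ → EuclideanSpace ℝ (Fin n)) (lam : ℝ → EuclideanSpace ℝ (Fin m))
    (hxM : ∀ t ∈ Set.Icc (0:ℝ) 1, g (x t) = 0)
    (hclosest : ∀ t ∈ Set.Icc (0:ℝ) 1, ∀ y, g y = 0 → ‖u t - x t‖ ≤ ‖u t - y‖)
    (hunique : ∀ t ∈ Set.Icc (0:ℝ) 1, ∀ y, g y = 0 →
      ‖u t - x t‖ = ‖u t - y‖ → y = x t)
    (hlam : ∀ t ∈ Set.Icc (0:ℝ) 1,
      ContinuousLinearMap.adjoint (fderiv ℝ g (x t)) (lam t) = u t - x t)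
    (hineq : ∀ t ∈ Set.Icc (0:ℝ) 1,
      (Finset.univ.filter
          (fun i : Fin m =>
            ‖fderiv ℝ (fun w => fderiv ℝ (fun y => g y i) w) (x t)‖ ≠ 0)) = ∅ ∨
      ‖u t - x t‖ <
        (1 / ((Finset.univ.filter
            (fun i : Fin m =>
              ‖fderiv ℝ (fun w => fderiv ℝ (fun y => g y i) w) (x t)‖ ≠ 0)).card : ℝ)) *
          ∑ i ∈ Finset.univ.filter
              (fun i : Fin m =>
                ‖fderiv ℝ (fun w => fderiv ℝ (fun y => g y i) w) (x t)‖ ≠ 0),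
            ‖gradient (fun y => g y i) (x t)‖ /
              ‖fderiv ℝ (fun w => fderiv ℝ (fun y => g y i) w) (x t)‖)
    -- the partition guaranteed by Theorem 2.7
    (s : ℕ) (hs : 0 < s) (t : ℕ → ℝ)
    (ht0 : t 0 = 0) (hts : t s = 1) (hmono : ∀ j < s, t j < t (j + 1))
    -- the region of quadratic convergence: radius `r` and uniform constant `Mc`
    (r : ℝ) (hr : 0 < r) (Mc : ℝ) (hMc : 0 ≤ Mc)
    (htube : ∀ j, 1 ≤ j → j ≤ s →
      ∀ w0 ∈ Metric.closedBall ((x (t j), lam (t j)) :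
          EuclideanSpace ℝ (Fin n) × EuclideanSpace ℝ (Fin m)) r,
        ∃ D : (EuclideanSpace ℝ (Fin n) × EuclideanSpace ℝ (Fin m)) ≃L[ℝ]
            (EuclideanSpace ℝ (Fin m) × EuclideanSpace ℝ (Fin n)),
          (D : (EuclideanSpace ℝ (Fin n) × EuclideanSpace ℝ (Fin m)) →L[ℝ]
              (EuclideanSpace ℝ (Fin m) × EuclideanSpace ℝ (Fin n))) =
            fderiv ℝ (lagrangeG g (u (t j))) w0 ∧
          ∀ w1 ∈ Metric.closedBall ((x (t j), lam (t j)) :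
              EuclideanSpace ℝ (Fin n) × EuclideanSpace ℝ (Fin m)) r,
            (1 / 2) * ‖(D.symm : (EuclideanSpace ℝ (Fin m) × EuclideanSpace ℝ (Fin n)) →L[ℝ]
                  (EuclideanSpace ℝ (Fin n) × EuclideanSpace ℝ (Fin m)))‖ *
                ‖fderiv ℝ (fun w => fderiv ℝ (lagrangeG g (u (t j))) w) w1‖ ≤ Mc)
    -- each `z(t_{j−1})` lies in the region of quadratic convergence around `z(t_j)`
    (hstep : ∀ j, 1 ≤ j → j ≤ s →
      ‖((x (t (j - 1)), lam (t (j - 1))) :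
          EuclideanSpace ℝ (Fin n) × EuclideanSpace ℝ (Fin m)) -
        (x (t j), lam (t j))‖ < r ∧
      Mc * ‖((x (t (j - 1)), lam (t (j - 1))) :
          EuclideanSpace ℝ (Fin n) × EuclideanSpace ℝ (Fin m)) -
        (x (t j), lam (t j))‖ < 1) :
    ∀ j, 1 ≤ j → j ≤ s →
      ∃ D0 : (EuclideanSpace ℝ (Fin n) × EuclideanSpace ℝ (Fin m)) ≃L[ℝ]
          (EuclideanSpace ℝ (Fin m) × EuclideanSpace ℝ (Fin n)),
        (D0 : (EuclideanSpace ℝ (Fin n) × EuclideanSpace ℝ (Fin m)) →L[ℝ]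
            (EuclideanSpace ℝ (Fin m) × EuclideanSpace ℝ (Fin n))) =
          fderiv ℝ (lagrangeG g (u (t (j - 1)))) (x (t (j - 1)), lam (t (j - 1))) ∧
        ∀ Δz : EuclideanSpace ℝ (Fin n) × EuclideanSpace ℝ (Fin m),
          Δz = -(D0.symm
              ((fderiv ℝ (fun w => lagrangeG g w (x (t (j - 1)), lam (t (j - 1))))
                  (u (t (j - 1)))) (u (t j) - u (t (j - 1))))) →
          -- the Euler-predicted point lies in the region of quadratic convergence
          ((x (t (j - 1)), lam (t (j - 1))) + Δz ∈
            Metric.closedBall ((x (t j), lam (t j)) :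
              EuclideanSpace ℝ (Fin n) × EuclideanSpace ℝ (Fin m)) r ∧
           Mc * ‖(x (t (j - 1)), lam (t (j - 1))) + Δz - (x (t j), lam (t j))‖ < 1) ∧
          -- and Newton's method started there converges to `z(t_j)`
          ∃ z : ℕ → EuclideanSpace ℝ (Fin n) × EuclideanSpace ℝ (Fin m),
            z 0 = (x (t (j - 1)), lam (t (j - 1))) + Δz ∧
            (∀ k, ∃ D : (EuclideanSpace ℝ (Fin n) × EuclideanSpace ℝ (Fin m)) ≃L[ℝ]
                (EuclideanSpace ℝ (Fin m) × EuclideanSpace ℝ (Fin n)),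
              (D : (EuclideanSpace ℝ (Fin n) × EuclideanSpace ℝ (Fin m)) →L[ℝ]
                  (EuclideanSpace ℝ (Fin m) × EuclideanSpace ℝ (Fin n))) =
                fderiv ℝ (lagrangeG g (u (t j))) (z k) ∧
              z (k + 1) = z k - D.symm (lagrangeG g (u (t j)) (z k))) ∧
            Filter.Tendsto z Filter.atTop (nhds (x (t j), lam (t j))) :=
  euler_newton_tracking_converges_general n m g hg u x lam hxM hlam s t ht0 hts hmono r Mc htube
    hstep
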